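/- arXiv:1306.3548 — 2 statements merged into one kernel-verified Lean document; each statement's English description precedes it below -/
import Mathlib

section
/- If for every transition t and every color c, Σ_{p ∈ t•} m_{W(t,p)}(c) = Σ_{p ∈ •t} m_{W(p,t)}(c) (the net is conservative), then the total number of tokens of each color is invariant under execution of any conflict-free firing set without reset arcs. -/
/-! Exchanging the order of summation over places and transitions turns conservativity of each
transition into equality of the tokens the firing set consumes and produces in total. Conflict
freeness makes every truncated subtraction in the update exact, so the totals simply cancel. -/

open Finset

theorem Finset.sum_sum_filter_comm {P T M : Type*} [Fintype P] [AddCommMonoid M]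
    (r : P → T → Prop) [∀ p t, Decidable (r p t)] (s : Finset T) (f : P → T → M) :
    ∑ p, ∑ t ∈ s.filter (r p), f p t = ∑ t ∈ s, ∑ p ∈ univ.filter (r · t), f p t :=
  sum_comm' fun p t => by simp only [mem_univ, mem_filter, true_and, and_comm]

theorem Finset.sum_tsub_add_eq_of_sum_eq {ι M : Type*} [AddCommMonoid M] [PartialOrder M]
    [Sub M] [OrderedSub M] [AddLeftMono M] [AddLeftReflectLE M] [ExistsAddOfLE M]
    (s : Finset ι) {m a b : ι → M} (hle : ∀ i ∈ s, a i ≤ m i)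
    (hab : ∑ i ∈ s, b i = ∑ i ∈ s, a i) :
    ∑ i ∈ s, (m i - a i + b i) = ∑ i ∈ s, m i := by
  rw [sum_add_distrib, sum_tsub_distrib s hle, hab, tsub_add_cancel_of_le (sum_le_sum hle)]

theorem sum_produced_eq_sum_consumed {P T M : Type*} [Fintype P] [AddCommMonoid M]
    (Win : P → T → M) (Wout : T → P → M)
    (pre : P → T → Prop) [∀ p, DecidablePred (pre p)]
    (post : T → P → Prop) [∀ t, DecidablePred (post t)]
    (hconservative : ∀ t,
      ∑ p ∈ univ.filter (post t ·), Wout t p = ∑ p ∈ univ.filter (pre · t), Win p t)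
    (Tk : Finset T) :
    ∑ p, ∑ t ∈ Tk.filter (post · p), Wout t p = ∑ p, ∑ t ∈ Tk.filter (pre p), Win p t := by
  rw [sum_sum_filter_comm (fun p t => post t p), sum_sum_filter_comm pre]
  exact sum_congr rfl fun t _ => hconservative t

theorem conservative_total_invariant_general {P T C : Type*} [Fintype P]
    (Win : P → T → C → ℕ) (Wout : T → P → C → ℕ)
    (pre : P → T → Prop) [∀ p, DecidablePred (pre p)]
    (post : T → P → Prop) [∀ t, DecidablePred (post t)]
    (hconservative : ∀ (t : T) (c : C),
      (∑ p ∈ Finset.univ.filter (fun p => post t p), Wout t p c)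
        = ∑ p ∈ Finset.univ.filter (fun p => pre p t), Win p t c)
    (M M' : P → C → ℕ) (Tk : Finset T)
    (hcf : ∀ (p : P) (c : C),
      (∑ s ∈ Tk.filter (fun s => pre p s), Win p s c) ≤ M p c)
    (hupd : ∀ p c, M' p c =
      M p c - (∑ s ∈ Tk.filter (fun s => pre p s), Win p s c)
        + (∑ s ∈ Tk.filter (fun s => post s p), Wout s p c)) :
    ∀ c : C, (∑ p : P, M' p c) = ∑ p : P, M p c := by
  intro c
  rw [sum_congr rfl fun p _ => hupd p c]
  exact sum_tsub_add_eq_of_sum_eq univ (fun p _ => hcf p c)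
    (sum_produced_eq_sum_consumed (Win · · c) (Wout · · c) pre post (hconservative · c) Tk)

/-- If for every transition `t` and color `c`,
`Σ_{p ∈ t•} m_{W(t,p)}(c) = Σ_{p ∈ •t} m_{W(p,t)}(c)` (the net is conservative), then the
total number of tokens of each color is invariant under execution of any conflict-free
firing set without reset arcs. -/
theorem conservative_total_invariant {P T C : Type*} [Fintype P] [DecidableEq T]
    (Win : P → T → C → ℕ) (Wout : T → P → C → ℕ)
    (pre : P → T → Prop) [∀ p, DecidablePred (pre p)]
    (post : T → P → Prop) [∀ t, DecidablePred (post t)]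
    (hconservative : ∀ (t : T) (c : C),
      (∑ p ∈ Finset.univ.filter (fun p => post t p), Wout t p c)
        = ∑ p ∈ Finset.univ.filter (fun p => pre p t), Win p t c)
    (M M' : P → C → ℕ) (Tk : Finset T)
    (hcf : ∀ (p : P) (c : C),
      (∑ s ∈ Tk.filter (fun s => pre p s), Win p s c) ≤ M p c)
    (hupd : ∀ p c, M' p c =
      M p c - (∑ s ∈ Tk.filter (fun s => pre p s), Win p s c)
        + (∑ s ∈ Tk.filter (fun s => post s p), Wout s p c)) :
    ∀ c : C, (∑ p : P, M' p c) = ∑ p : P, M p c :=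
  conservative_total_invariant_general Win Wout pre post hconservative M M' Tk hcf hupd
end

section
/- In a timed colored Petri net, the total tokens of color c present in markings plus tokens 'in transit' (produced by fired transitions but not yet delivered) is conserved at every step if the net is conservative per transition. -/
/-!
Induction on time. By per-transition conservativity, a firing at time `k` removes from the
places exactly the tokens it puts in transit; the tokens delivered at time `k + 1` are exactly
those leaving the transit pool then. Since `D t ≥ 1`, nothing fired at time `k` is delivered
before `k + 1`, so no token escapes both counts.
-/

open Finset

theorem Finset.sum_add_sum_eq_of_eq_tsub_add {ι M : Type*} [AddCommMonoid M] [PartialOrder M]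
    [ExistsAddOfLE M] [AddLeftMono M] [Sub M] [OrderedSub M]
    (s : Finset ι) {a b c d : ι → M} (hle : ∀ i ∈ s, b i ≤ a i)
    (hd : ∀ i ∈ s, d i = a i - b i + c i) :
    ∑ i ∈ s, d i + ∑ i ∈ s, b i = ∑ i ∈ s, a i + ∑ i ∈ s, c i := by
  rw [← sum_add_distrib, ← sum_add_distrib]
  exact sum_congr rfl fun i hi => by
    rw [hd i hi, add_right_comm, tsub_add_cancel_of_le (hle i hi)]

theorem Finset.sum_univ_sum_filter_comm {P T M : Type*} [Fintype P] [AddCommMonoid M]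
    (R : P → T → Prop) [∀ p, DecidablePred (R p)] (s : Finset T) (f : P → T → M) :
    ∑ p, ∑ t ∈ s.filter (R p), f p t = ∑ t ∈ s, ∑ p ∈ univ.filter (R · t), f p t :=
  sum_comm' fun p t => by simp only [mem_filter, mem_univ, true_and]; tauto

namespace TimedNet

variable {P T M : Type*} [AddCommMonoid M]

def transit (S : ℕ → Finset T) (D : T → ℕ) (f : T → M) (k : ℕ) : M :=
  ∑ l ∈ range k, ∑ t ∈ (S l).filter (fun t => k + 1 ≤ l + D t), f t

def delivered (S : ℕ → Finset T) (D : T → ℕ) (f : T → M) (n : ℕ) : M :=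
  ∑ l ∈ range n, ∑ t ∈ (S l).filter (fun t => l + D t = n), f t

theorem transit_add_sum_fired (S : ℕ → Finset T) (D : T → ℕ) (f : T → M)
    (hD : ∀ t, 1 ≤ D t) (k : ℕ) :
    transit S D f k + ∑ t ∈ S k, f t = transit S D f (k + 1) + delivered S D f (k + 1) := by
  have fired_in_transit : (S k).filter (fun t => k + 1 ≤ k + D t) = S k :=
    filter_true_of_mem fun t _ => by have := hD t; omega
  rw [transit, ← fired_in_transit, ← sum_range_succ (fun l =>
      ∑ t ∈ (S l).filter (fun t => k + 1 ≤ l + D t), f t), transit, delivered,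
    ← sum_add_distrib]
  refine sum_congr rfl fun l _ => ?_
  simp only [sum_filter, ← sum_add_distrib]
  refine sum_congr rfl fun t _ => ?_
  split_ifs <;> first | omega | simp

variable [Fintype P]

theorem sum_consumed_eq_sum_produced {Win : P → T → M} {Wout : T → P → M}
    {pre : P → T → Prop} [∀ p, DecidablePred (pre p)]
    {post : T → P → Prop} [∀ t, DecidablePred (post t)]
    (hconservative : ∀ t, ∑ p ∈ univ.filter (fun p => post t p), Wout t p
      = ∑ p ∈ univ.filter (pre · t), Win p t) (s : Finset T) :
    ∑ p, ∑ t ∈ s.filter (pre p), Win p t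
      = ∑ t ∈ s, ∑ p ∈ univ.filter (fun p => post t p), Wout t p := by
  rw [sum_univ_sum_filter_comm]
  exact sum_congr rfl fun t _ => (hconservative t).symm

theorem sum_delivered_eq_delivered (S : ℕ → Finset T) (D : T → ℕ) (Wout : T → P → M)
    (post : T → P → Prop) [∀ t, DecidablePred (post t)] (n : ℕ) :
    ∑ p, ∑ l ∈ range n, ∑ t ∈ (S l).filter (fun t => post t p ∧ l + D t = n), Wout t p
      = delivered S D (fun t => ∑ p ∈ univ.filter (fun p => post t p), Wout t p) n := by
  rw [sum_comm, delivered]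
  refine sum_congr rfl fun l _ => ?_
  simp only [← filter_filter (fun t => post t _), filter_comm (fun t => post t _)]
  exact sum_univ_sum_filter_comm (fun p t => post t p) _ _

end TimedNet

open TimedNet

theorem timed_conservation_general {P T C : Type*} [Fintype P]
    (Win : P → T → C → ℕ) (Wout : T → P → C → ℕ)
    (pre : P → T → Prop) [∀ p, DecidablePred (pre p)]
    (post : T → P → Prop) [∀ t, DecidablePred (post t)]
    (D : T → ℕ) (hD : ∀ t, 1 ≤ D t)
    (hconservative : ∀ (t : T) (c : C),
      (∑ p ∈ Finset.univ.filter (fun p => post t p), Wout t p c)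
        = ∑ p ∈ Finset.univ.filter (fun p => pre p t), Win p t c)
    (Tseq : ℕ → Finset T) (M : ℕ → P → C → ℕ)
    (hcf : ∀ k p c, (∑ t ∈ (Tseq k).filter (fun t => pre p t), Win p t c) ≤ M k p c)
    (hupd : ∀ k p c, M (k + 1) p c =
      M k p c - (∑ t ∈ (Tseq k).filter (fun t => pre p t), Win p t c)
        + ∑ l ∈ Finset.range (k + 1),
            ∑ t ∈ (Tseq l).filter (fun t => post t p ∧ l + D t = k + 1), Wout t p c) :
    ∀ (k : ℕ) (c : C),
      (∑ p : P, M k p c)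
        + (∑ l ∈ Finset.range k,
            ∑ t ∈ (Tseq l).filter (fun t => k + 1 ≤ l + D t),
              ∑ p ∈ Finset.univ.filter (fun p => post t p), Wout t p c)
      = ∑ p : P, M 0 p c := by
  intro k c
  induction k with
  | zero => simp
  | succ k ih =>
    have marking := sum_add_sum_eq_of_eq_tsub_add univ (fun p _ => hcf k p c)
      (fun p _ => hupd k p c)
    simp only [sum_consumed_eq_sum_produced (hconservative · c),
      sum_delivered_eq_delivered] at marking
    have transit_step := transit_add_sum_fired Tseq D
      (fun t => ∑ p ∈ univ.filter (fun p => post t p), Wout t p c) hD k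
    simp only [transit, delivered] at transit_step marking
    omega

/-- In a timed colored Petri net (durations `D t ≥ 1`, no reset arcs, conflict-free firing
sets) that is conservative per transition, the total tokens of color `c` present in the
marking plus tokens "in transit" (produced by fired transitions but not yet delivered) is
conserved at every step.  A transition fired at time `l` consumes at step `l` and delivers
its output into the marking at time `l + D t`; it is in transit at observation time `k`
iff `l < k` and `l + D t ≥ k + 1`. -/
theorem timed_conservation {P T C : Type*} [Fintype P] [DecidableEq T]
    (Win : P → T → C → ℕ) (Wout : T → P → C → ℕ)
    (pre : P → T → Prop) [∀ p, DecidablePred (pre p)]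
    (post : T → P → Prop) [∀ t, DecidablePred (post t)]
    (D : T → ℕ) (hD : ∀ t, 1 ≤ D t)
    (hconservative : ∀ (t : T) (c : C),
      (∑ p ∈ Finset.univ.filter (fun p => post t p), Wout t p c)
        = ∑ p ∈ Finset.univ.filter (fun p => pre p t), Win p t c)
    (Tseq : ℕ → Finset T) (M : ℕ → P → C → ℕ)
    (hcf : ∀ k p c, (∑ t ∈ (Tseq k).filter (fun t => pre p t), Win p t c) ≤ M k p c)
    (hupd : ∀ k p c, M (k + 1) p c =
      M k p c - (∑ t ∈ (Tseq k).filter (fun t => pre p t), Win p t c)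
        + ∑ l ∈ Finset.range (k + 1),
            ∑ t ∈ (Tseq l).filter (fun t => post t p ∧ l + D t = k + 1), Wout t p c) :
    ∀ (k : ℕ) (c : C),
      (∑ p : P, M k p c)
        + (∑ l ∈ Finset.range k,
            ∑ t ∈ (Tseq l).filter (fun t => k + 1 ≤ l + D t),
              ∑ p ∈ Finset.univ.filter (fun p => post t p), Wout t p c)
      = ∑ p : P, M 0 p c :=
  timed_conservation_general Win Wout pre post D hD hconservative Tseq M hcf hupd
end
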